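/- Let q ∈ (0,1) and let D = (D_{iℓ}) be a random b×c matrix whose entries are i.i.d. geometric with P(D_{iℓ} = k) = (1−q)q^k. Then for every plane partition π with at most b rows and entries at most c, P(D = Φ(π)) = (1−q)^{bc} q^{des(π)}, where des(π) = |Des(π)|; that is, the pushforward of this product measure under Φ^{−1} is the g-measure on PP(∞,b,c) with all parameters q_i = q. -/

import Mathlib

open scoped BigOperators

/-- A plane partition: a matrix of naturals (0-indexed) with weakly decreasing rows and
columns and finitely many nonzero entries. -/
structure PlanePartition where
  entry : ℕ → ℕ → ℕ
  row_decr : ∀ i j, entry i (j + 1) ≤ entry i j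
  col_decr : ∀ i j, entry (i + 1) j ≤ entry i j
  finite_support : {p : ℕ × ℕ | entry p.1 p.2 ≠ 0}.Finite

namespace PlanePartition

/-- `π` has at most `b` (nonzero) rows. -/
def rowsLE (π : PlanePartition) (b : ℕ) : Prop := ∀ i j, b ≤ i → π.entry i j = 0

/-- `π` has at most `a` (nonzero) columns. -/
def colsLE (π : PlanePartition) (a : ℕ) : Prop := ∀ i j, a ≤ j → π.entry i j = 0

/-- all entries of `π` are at most `c`. -/
def entriesLE (π : PlanePartition) (c : ℕ) : Prop := ∀ i j, π.entry i j ≤ c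

/-- the number of columns of `π` containing the entry `ℓ`. -/
noncomputable def cCol (π : PlanePartition) (ℓ : ℕ) : ℕ :=
  {j | ∃ i, π.entry i j = ℓ}.ncard

/-- the length of the `i`-th row of `π` (0-indexed); this is the `(i+1)`-st part of
the shape of `π`. -/
noncomputable def rowLen (π : PlanePartition) (i : ℕ) : ℕ :=
  {j | 0 < π.entry i j}.ncard

/-- `d_{iℓ} = #{j : π_{ij} = ℓ > π_{i+1,j}}`; the row index `i` is 0-indexed
while `ℓ` denotes the actual value. -/
noncomputable def phi (π : PlanePartition) (i ℓ : ℕ) : ℕ :=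
  {j | π.entry i j = ℓ ∧ π.entry (i + 1) j < ℓ}.ncard

/-- `Φ(π)` as a 0-indexed matrix: entry `(i, l)` counts `j` with `π_{ij} = l+1 > π_{i+1,j}`. -/
noncomputable def phiMatrix (π : PlanePartition) : ℕ → ℕ → ℕ :=
  fun i l => π.phi i (l + 1)

/-- `π` has shape `μ`. -/
def hasShape (π : PlanePartition) (μ : YoungDiagram) : Prop :=
  ∀ i j, 0 < π.entry i j ↔ (i, j) ∈ μ

/-- the descent set of `π` (0-indexed positions). -/
def des (π : PlanePartition) : Set (ℕ × ℕ) :=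
  {p | π.entry (p.1 + 1) p.2 < π.entry p.1 p.2}

end PlanePartition

/-- the set of plane partitions with at most `a` columns, at most `b` rows
and entries at most `c`. -/
def PP (a b c : ℕ) : Set PlanePartition :=
  {π | π.colsLE a ∧ π.rowsLE b ∧ π.entriesLE c}

/-- `PP(∞, b, c)`: plane partitions with at most `b` rows and entries at most `c`. -/
def PPinf (b c : ℕ) : Set PlanePartition :=
  {π | π.rowsLE b ∧ π.entriesLE c}

/-- a monotone lattice path (as a list of points) from `s` to `t`. -/
def IsMonPath (L : List (ℕ × ℕ)) (s t : ℕ × ℕ) : Prop :=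
  L.head? = some s ∧ L.getLast? = some t ∧
    L.Chain' fun p q => q = (p.1 + 1, p.2) ∨ q = (p.1, p.2 + 1)

/-- the last passage time: the maximal weight of a monotone path from `s` to `t`
in the matrix `d`. -/
noncomputable def lastPassage (d : ℕ → ℕ → ℕ) (s t : ℕ × ℕ) : ℕ :=
  sSup {n | ∃ L, IsMonPath L s t ∧ n = (L.map fun p => d p.1 p.2).sum}

/-- `b×c` matrices of naturals (as functions vanishing off `[0,b) × [0,c)`) whose
last passage time `G(b,c)` is at most `a`. -/
def BM (a b c : ℕ) : Set (ℕ → ℕ → ℕ) :=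
  {d | (∀ i j, b ≤ i → d i j = 0) ∧ (∀ i j, c ≤ j → d i j = 0) ∧
    lastPassage d (0, 0) (b - 1, c - 1) ≤ a}

/-- the rectangular Young diagram of the partition `(a^b)` (with `b` rows of length `a`). -/
def rectDiagram (a b : ℕ) : YoungDiagram where
  cells := Finset.range b ×ˢ Finset.range a
  isLowerSet := by
    intro p q hle hp
    simp only [Finset.coe_product, Set.mem_prod, Finset.mem_coe, Finset.mem_range] at hp ⊢
    exact ⟨lt_of_le_of_lt hle.1 hp.1, lt_of_le_of_lt hle.2 hp.2⟩

/-- the variables `(1^b, x_1, x_2, …)`: the first `b` variables are specialized to `1`. -/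
def oneExtend (b : ℕ) (x : ℕ → ℝ) : ℕ → ℝ :=
  fun i => if i < b then 1 else x (i - b)

/-- the Schur polynomial `s_μ(x_1, …, x_N)` evaluated at real arguments;
variables are 0-indexed (`x ℓ` is the variable `x_{ℓ+1}`), as are tableau entries. -/
noncomputable def schur (μ : YoungDiagram) (N : ℕ) (x : ℕ → ℝ) : ℝ :=
  ∑ᶠ T ∈ {T : SemistandardYoungTableau μ | ∀ i j, (i, j) ∈ μ → T i j < N},
    ∏ p ∈ μ.cells, x (T p.1 p.2)

/-- the dual symmetric Grothendieck polynomial `g_μ(x_1, …, x_n)` evaluated at real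
arguments; variables are 0-indexed (`x ℓ` is the variable `x_{ℓ+1}`). -/
noncomputable def grothG (μ : YoungDiagram) (n : ℕ) (x : ℕ → ℝ) : ℝ :=
  ∑ᶠ π ∈ {π : PlanePartition | π.hasShape μ ∧ π.entriesLE n},
    ∏ ℓ ∈ Finset.range n, x ℓ ^ π.cCol (ℓ + 1)

/-- the elementary symmetric polynomial `e_m(x_1, …, x_n)` evaluated at real arguments. -/
noncomputable def esym (n : ℕ) (x : ℕ → ℝ) (m : ℕ) : ℝ :=
  ∑ S ∈ (Finset.range n).powersetCard m, ∏ i ∈ S, x i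

/-- `e_m` for an integer index `m`, with `e_m = 0` for `m < 0`. -/
noncomputable def esymZ (n : ℕ) (x : ℕ → ℝ) (m : ℤ) : ℝ :=
  if 0 ≤ m then esym n x m.toNat else 0

/-- the weight `∏_{(i,j) ∈ Des(π)} q_{π_{ij}}`; the parameters are 0-indexed
(`q ℓ` is the parameter `q_{ℓ+1}`). -/
noncomputable def desWeight (π : PlanePartition) (q : ℕ → ℝ) : ℝ :=
  ∏ᶠ p ∈ π.des, q (π.entry p.1 p.2 - 1)

/-- the probability of a configuration `w` of a `b×c` matrix of i.i.d. Geom(q) entries,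
where `P(entry = k) = (1-q) qᵏ`. -/
noncomputable def geomWeight (q : ℝ) (b c : ℕ) (w : Fin b × Fin c → ℕ) : ℝ :=
  ∏ p : Fin b × Fin c, ((1 - q) * q ^ w p)

/-- extend a `b×c` matrix to an `ℕ × ℕ`-indexed matrix by zero. -/
def matExt {b c : ℕ} (w : Fin b × Fin c → ℕ) : ℕ → ℕ → ℕ :=
  fun i j => if h : i < b ∧ j < c then w (⟨i, h.1⟩, ⟨j, h.2⟩) else 0

/-
The product weight of a matrix `w` of i.i.d. geometric entries is `(1-q)^{bc} q^{Σ w}`, so it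
suffices that the entries of `Φ(π)` sum to `|Des(π)|`. This holds because `(i, j) ↦ (i, π_{ij})`
sorts the descents of `π` into the fibres counted by the entries `d_{iℓ}` of `Φ(π)`; the bounds on
rows and entries make every descent land inside the `b × c` window.
-/

open Finset

theorem geomWeight_eq_pow_mul_pow_sum (q : ℝ) (b c : ℕ) (w : Fin b × Fin c → ℕ) :
    geomWeight q b c w = (1 - q) ^ (b * c) * q ^ ∑ p, w p := by
  simp only [geomWeight, prod_mul_distrib, prod_const, prod_pow_eq_pow_sum, card_univ,
    Fintype.card_prod, Fintype.card_fin]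

theorem Fin.sum_univ_prod_eq_sum_range_product {M : Type*} [AddCommMonoid M] (b c : ℕ)
    (f : ℕ → ℕ → M) :
    ∑ p : Fin b × Fin c, f p.1 p.2 = ∑ p ∈ range b ×ˢ range c, f p.1 p.2 := by
  rw [Fintype.sum_prod_type, sum_product, ← Fin.sum_univ_eq_sum_range _ b]
  exact sum_congr rfl fun i _ => Fin.sum_univ_eq_sum_range (f i) c

namespace PlanePartition

theorem des_finite (π : PlanePartition) : π.des.Finite :=
  π.finite_support.subset fun p (hp : π.entry (p.1 + 1) p.2 < π.entry p.1 p.2) =>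
    Nat.ne_zero_of_lt hp

theorem phi_eq_ncard_des (π : PlanePartition) (i ℓ : ℕ) :
    π.phi i ℓ = {p ∈ π.des | p.1 = i ∧ π.entry p.1 p.2 = ℓ}.ncard := by
  rw [phi, ← Set.ncard_image_of_injective _ (Prod.mk_right_injective i)]
  congr 1
  ext ⟨i', j⟩
  simp only [Set.mem_image, Set.mem_ofPred_eq, des, Prod.mk.injEq]
  constructor
  · rintro ⟨j, ⟨hℓ, hdes⟩, rfl, rfl⟩
    exact ⟨hℓ ▸ hdes, rfl, hℓ⟩
  · rintro ⟨hdes, rfl, hℓ⟩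
    exact ⟨j, ⟨hℓ, hℓ ▸ hdes⟩, rfl, rfl⟩

theorem ncard_des_eq_sum_phi {π : PlanePartition} {b c : ℕ} (hrows : π.rowsLE b)
    (hent : π.entriesLE c) :
    π.des.ncard = ∑ p ∈ range b ×ˢ range c, π.phi p.1 (p.2 + 1) := by
  classical
  have hmaps : Set.MapsTo (fun p : ℕ × ℕ => (p.1, π.entry p.1 p.2 - 1))
      π.des ↑(range b ×ˢ range c) := by
    intro p (hp : π.entry (p.1 + 1) p.2 < π.entry p.1 p.2)
    have hrow : p.1 < b := by
      by_contra h
      have := hrows p.1 p.2 (not_lt.mp h)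
      omega
    have := hent p.1 p.2
    simp only [coe_product, coe_range, Set.mem_prod, Set.mem_Iio]
    omega
  rw [Set.ncard_eq_toFinset_card _ π.des_finite,
    card_eq_sum_card_fiberwise (π.des_finite.coe_toFinset.symm ▸ hmaps)]
  refine sum_congr rfl fun p _ => ?_
  rw [phi_eq_ncard_des, ← Set.ncard_coe_finset]
  congr 1
  ext x
  simp only [coe_filter, Set.Finite.mem_toFinset, Set.mem_ofPred_eq, des, Prod.ext_iff]
  omega

end PlanePartition

theorem geom_pushforward_gMeasure_general (q : ℝ) (b c : ℕ) (π : PlanePartition)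
    (hrows : π.rowsLE b) (hent : π.entriesLE c) :
    geomWeight q b c (fun p => π.phiMatrix (p.1 : ℕ) (p.2 : ℕ))
      = (1 - q) ^ (b * c) * q ^ π.des.ncard := by
  rw [geomWeight_eq_pow_mul_pow_sum, PlanePartition.ncard_des_eq_sum_phi hrows hent]
  congr 2
  exact Fin.sum_univ_prod_eq_sum_range_product b c fun i l => π.phi i (l + 1)

/-- if `D` is a random `b×c` matrix of i.i.d. Geom(q) entries, then for
every plane partition `π` with at most `b` rows and entries at most `c`,
`P(D = Φ(π)) = (1−q)^{bc} q^{des(π)}`; i.e. the pushforward of the product geometric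
measure under `Φ⁻¹` is the `g`-measure on `PP(∞,b,c)` with all parameters `q`. -/
theorem geom_pushforward_gMeasure (q : ℝ) (hq : q ∈ Set.Ioo (0 : ℝ) 1) (b c : ℕ)
    (hb : 0 < b) (hc : 0 < c) (π : PlanePartition)
    (hrows : π.rowsLE b) (hent : π.entriesLE c) :
    geomWeight q b c (fun p => π.phiMatrix (p.1 : ℕ) (p.2 : ℕ))
      = (1 - q) ^ (b * c) * q ^ π.des.ncard :=
  geom_pushforward_gMeasure_general q b c π hrows hent
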